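/- arXiv:2203.00118 — 2 statements merged into one kernel-verified Lean document; each statement's English description precedes it below -/
import Mathlib

section
/- Let K be a compact region in ℝ³, let δ be a spin character of K, and suppose p ∈ ℝ³ satisfies δ(z₀₁|_K) = z₀₁(p), δ(z₀₂|_K) = z₀₂(p), and δ(z₁₂|_K) = z₁₂(p). Then p ∈ K. (Quaternionic form of the identification lemma: the point produced by the correspondence lemma lies in the region itself.) -/
noncomputable section

abbrev R3 : Type := EuclideanSpace ℝ (Fin 3)

abbrev Quat := Quaternion ℝ

def e (m : Fin 3) : R3 := EuclideanSpace.single m 1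

def qi : Quat := ⟨0, 1, 0, 0⟩
def qj : Quat := ⟨0, 0, 1, 0⟩
def qk : Quat := ⟨0, 0, 0, 1⟩

/-- `f` is monogenic on `U`. -/
def MonogenicOn (f : R3 → Quat) (U : Set R3) : Prop :=
  ∀ x ∈ U, DifferentiableAt ℝ f x ∧
    fderiv ℝ f x (e 0) + qk * fderiv ℝ f x (e 1) + qj * fderiv ℝ f x (e 2) = 0

open Classical in
/-- Extension of a continuous map on `K` by zero. -/
def extendK (K : Set R3) (f : C(K, Quat)) : R3 → Quat :=
  fun x => if h : x ∈ K then f ⟨x, h⟩ else 0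

/-- `f : C(K, Quat)` is monogenic on the interior of `K`. -/
def MonogenicOnInterior (K : Set R3) (f : C(K, Quat)) : Prop :=
  MonogenicOn (extendK K f) (interior K)

/-- `w` lies in the real plane `ℝ·1 + ℝ·q`. -/
def InPlane (q w : Quat) : Prop := ∃ a b : ℝ, w = a • 1 + b • q

/-- Plane-spinor fields on `K`. -/
def IsPlaneSpinor (K : Set R3) (f : C(K, Quat)) : Prop :=
  ∃ q : Quat, q ^ 2 = -1 ∧ (∀ x, InPlane q (f x)) ∧ MonogenicOnInterior K f

/-- Spin characters of `K`. -/
structure IsSpinCharacter (K : Set R3) (δ : C(K, Quat) → Quat) : Prop where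
  continuous : Continuous δ
  map_add : ∀ f g : C(K, Quat), δ (f + g) = δ f + δ g
  map_smul_right : ∀ (f : C(K, Quat)) (a : Quat), δ (f * ContinuousMap.const _ a) = δ f * a
  map_one : δ 1 = 1
  grade_real : ∀ f : C(K, Quat), (∀ x, ∃ a : ℝ, f x = (a : ℝ) • 1) → ∃ a : ℝ, δ f = (a : ℝ) • 1
  grade_imaginary : ∀ f : C(K, Quat), (∀ x, (f x).re = 0) → (δ f).re = 0
  map_list_prod : ∀ L : List C(K, Quat), (∀ f ∈ L, IsPlaneSpinor K f) →
    δ L.prod = (L.map δ).prod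

/-- The monogenic spinor fields 𝓜⁺(K): the closure in `C(K, Quat)` of restrictions of
functions monogenic on an open neighborhood of `K`. -/
def MonSpinorFields (K : Set R3) : Set C(K, Quat) :=
  closure { f : C(K, Quat) | ∃ U : Set R3, ∃ F : R3 → Quat,
    IsOpen U ∧ K ⊆ U ∧ MonogenicOn F U ∧ ∀ x : K, f x = F x }

/-- A compact region in ℝ³. -/
def IsCompactRegion (K : Set R3) : Prop :=
  K.Nonempty ∧ IsCompact K ∧ K = closure (interior K) ∧ IsConnected Kᶜ


/-- The monogenic coordinate function `z₀₁(x) = x₁·1 − x₀·k`. -/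
def z01 : R3 → Quat := fun x => (x 1) • (1 : Quat) - (x 0) • qk

/-- The monogenic coordinate function `z₀₂(x) = x₂·1 − x₀·j`. -/
def z02 : R3 → Quat := fun x => (x 2) • (1 : Quat) - (x 0) • qj

/-- The monogenic coordinate function `z₁₂(x) = x₂·1 − x₁·i`. -/
def z12 : R3 → Quat := fun x => (x 2) • (1 : Quat) - (x 1) • qi

lemma z01_continuous : Continuous z01 :=
  (((EuclideanSpace.proj (1 : Fin 3)).continuous).smul continuous_const).sub
    (((EuclideanSpace.proj (0 : Fin 3)).continuous).smul continuous_const)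

lemma z02_continuous : Continuous z02 :=
  (((EuclideanSpace.proj (2 : Fin 3)).continuous).smul continuous_const).sub
    (((EuclideanSpace.proj (0 : Fin 3)).continuous).smul continuous_const)

lemma z12_continuous : Continuous z12 :=
  (((EuclideanSpace.proj (2 : Fin 3)).continuous).smul continuous_const).sub
    (((EuclideanSpace.proj (1 : Fin 3)).continuous).smul continuous_const)

/-- The restriction of `z₀₁` to `K` as a continuous map. -/
def z01K (K : Set R3) : C(K, Quat) := ContinuousMap.restrict K ⟨z01, z01_continuous⟩

/-- The restriction of `z₀₂` to `K` as a continuous map. -/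
def z02K (K : Set R3) : C(K, Quat) := ContinuousMap.restrict K ⟨z02, z02_continuous⟩

/-- The restriction of `z₁₂` to `K` as a continuous map. -/
def z12K (K : Set R3) : C(K, Quat) := ContinuousMap.restrict K ⟨z12, z12_continuous⟩


/-!
Suppose `p ∉ K`. Each shifted coordinate `Z = z - z(p)` is an affine plane spinor with
`δ Z = 0`, and for a unit `r` anticommuting with the plane of `Z` the plane-spinor word
`Z r Z (-r) = Z Z̄` is the real field `|Z|²`. Summing the three words gives `W = 2 |x - p|²`,
which lies in the non-unital algebra generated by plane-spinor words with a `δ`-null factor,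
and this algebra is killed by `δ`. As `W` is bounded away from `0` on the compact set `K`,
`‖1 + c W‖ < 1` for a suitable `c`, so `(1 + c W)ⁿ → 0`; yet `δ ((1 + c W)ⁿ) = δ 1 = 1`,
contradicting the continuity of `δ`.
-/

open scoped Quaternion Topology

lemma qi_sq : qi ^ 2 = -1 := by ext <;> simp [pow_two] <;> simp [qi]

lemma qj_sq : qj ^ 2 = -1 := by ext <;> simp [pow_two] <;> simp [qj]

lemma qk_sq : qk ^ 2 = -1 := by ext <;> simp [pow_two] <;> simp [qk]

lemma qk_mul_qi : qk * qi = qj := by ext <;> simp <;> simp [qi, qj, qk]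

lemma qk_mul_qi_eq_neg : qk * qi = -(qi * qk) := by ext <;> simp <;> simp [qi, qk]

lemma qj_mul_qi_eq_neg : qj * qi = -(qi * qj) := by ext <;> simp <;> simp [qi, qj]

lemma qi_mul_qj_eq_neg : qi * qj = -(qj * qi) := by ext <;> simp <;> simp [qi, qj]

/-- Conjugation by `r` turns `w = α + β q` into `w̄ = α - β q`, so the word is `w w̄`. -/
lemma smul_one_add_smul_mul_mul_neg {A : Type*} [Ring A] [Algebra ℝ A] {q r : A}
    (hq : q ^ 2 = -1) (hr : r ^ 2 = -1) (hqr : q * r = -(r * q)) (α β : ℝ) :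
    (α • 1 + β • q) * r * (α • 1 + β • q) * -r = (α ^ 2 + β ^ 2) • (1 : A) := by
  have hflip : (α • 1 + β • q) * r = r * (α • 1 - β • q) := by
    simp only [add_mul, mul_sub, smul_mul_assoc, mul_smul_comm, one_mul, mul_one, hqr, smul_neg]
    abel
  have hnorm : (α • 1 - β • q) * (α • 1 + β • q) = (α ^ 2 + β ^ 2) • (1 : A) := by
    rw [pow_two] at hq
    simp only [sub_mul, mul_add, smul_mul_assoc, mul_smul_comm, one_mul, mul_one, hq]
    module
  rw [pow_two] at hr
  rw [hflip, mul_assoc r, hnorm, mul_smul_comm, mul_one, smul_mul_assoc, mul_neg, hr, neg_neg]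

theorem AddMonoidHom.map_one_eq_zero_of_norm_one_add_lt_one {A B : Type*} [SeminormedRing A]
    [AddCommGroup B] [TopologicalSpace B] [T2Space B] (φ : A →+ B) (hφ : Continuous φ)
    {M : NonUnitalSubring A} (hM : ∀ x ∈ M, φ x = 0) {u : A} (hu : u ∈ M)
    (h : ‖1 + u‖ < 1) :
    φ 1 = 0 := by
  have hpow : ∀ n : ℕ, (1 + u) ^ n - 1 ∈ M := by
    intro n
    induction n with
    | zero => simp
    | succ n ih =>
      have hsucc : (1 + u) ^ (n + 1) - 1 = ((1 + u) ^ n - 1) + ((1 + u) ^ n - 1) * u + u := by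
        rw [pow_succ]; noncomm_ring
      rw [hsucc]
      exact add_mem (add_mem ih (mul_mem ih hu)) hu
  have hφpow : ∀ n : ℕ, φ ((1 + u) ^ n) = φ 1 := fun n => by
    rw [← sub_add_cancel ((1 + u) ^ n) 1, map_add, hM _ (hpow n), zero_add]
  have hlim := (hφ.tendsto 0).comp (tendsto_pow_atTop_nhds_zero_of_norm_lt_one h)
  simp only [Function.comp_def, hφpow, map_zero] at hlim
  exact tendsto_const_nhds_iff.mp hlim

lemma ContinuousMap.exists_norm_one_add_smul_lt_one {X A : Type*} [TopologicalSpace X]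
    [CompactSpace X] [NormedRing A] [NormedAlgebra ℝ A] [NormOneClass A] (s : C(X, ℝ))
    (hs : ∀ x, 0 < s x) {f : C(X, A)}
    (hf : ∀ x, f x = s x • 1) : ∃ c : ℝ, ‖1 + c • f‖ < 1 := by
  cases isEmpty_or_nonempty X
  · exact ⟨0, by rw [Subsingleton.elim (1 + (0 : ℝ) • f) 0, norm_zero]; exact one_pos⟩
  obtain ⟨x₀, -, hx₀⟩ :=
    isCompact_univ.exists_isMinOn Set.univ_nonempty s.continuous.continuousOn
  have hle : ∀ x, s x ≤ ‖s‖ := fun x => (le_abs_self _).trans (s.norm_coe_le_norm x)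
  have hM : 0 < ‖s‖ := (hs x₀).trans_le (hle x₀)
  have hmin : ∀ x, s x₀ / ‖s‖ ≤ s x / ‖s‖ := fun x =>
    div_le_div_of_nonneg_right (hx₀ (Set.mem_univ x)) hM.le
  have hmax : ∀ x, s x / ‖s‖ ≤ 1 := fun x => (div_le_one hM).2 (hle x)
  refine ⟨-‖s‖⁻¹, lt_of_le_of_lt (b := 1 - s x₀ / ‖s‖) ?_ ?_⟩
  · refine (ContinuousMap.norm_le _ (sub_nonneg.2 (hmax x₀))).2 fun x => ?_
    have hx : (1 + -‖s‖⁻¹ • f) x = (1 - s x / ‖s‖) • (1 : A) := by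
      simp only [ContinuousMap.add_apply, ContinuousMap.smul_apply, ContinuousMap.one_apply, hf]
      module
    rw [hx, norm_smul, norm_one, mul_one, Real.norm_eq_abs, abs_of_nonneg (sub_nonneg.2 (hmax x))]
    linarith [hmin x]
  · linarith [div_pos (hs x₀) hM]

lemma InPlane.add {q v w : Quat} (hv : InPlane q v) (hw : InPlane q w) : InPlane q (v + w) := by
  obtain ⟨a, b, rfl⟩ := hv
  obtain ⟨c, d, rfl⟩ := hw
  exact ⟨a + c, b + d, by module⟩

/-- A continuous linear map is monogenic exactly when it satisfies this equation. -/
def IsMonogenicCLM (L : R3 →L[ℝ] Quat) : Prop :=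
  L (e 0) + qk * L (e 1) + qj * L (e 2) = 0

lemma isPlaneSpinor_of_affine {K : Set R3} {q : Quat} (hq : q ^ 2 = -1) {L : R3 →L[ℝ] Quat}
    (hL : ∀ x, InPlane q (L x)) (hLmon : IsMonogenicCLM L) {a : Quat} (ha : InPlane q a)
    {f : C(K, Quat)} (hf : ∀ x : K, f x = L x + a) :
    IsPlaneSpinor K f := by
  refine ⟨q, hq, fun x => hf x ▸ (hL x).add ha, fun x hx => ?_⟩
  have hext : extendK K f =ᶠ[𝓝 x] fun y => L y + a := by
    filter_upwards [isOpen_interior.mem_nhds hx] with y hy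
    simp [extendK, interior_subset hy, hf ⟨y, interior_subset hy⟩]
  refine ⟨(L.differentiableAt.add_const a).congr_of_eventuallyEq hext, ?_⟩
  rwa [hext.fderiv_eq, fderiv_add_const, ContinuousLinearMap.fderiv]

lemma isPlaneSpinor_const (K : Set R3) {q a : Quat} (hq : q ^ 2 = -1) (ha : InPlane q a) :
    IsPlaneSpinor K (ContinuousMap.const K a) :=
  isPlaneSpinor_of_affine (L := 0) hq (fun _ => ⟨0, 0, by simp⟩) (by simp [IsMonogenicCLM]) ha
    (by simp)

def planeCLM (a b : Fin 3) (q : Quat) : R3 →L[ℝ] Quat :=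
  (EuclideanSpace.proj b).smulRight 1 - (EuclideanSpace.proj a).smulRight q

lemma planeCLM_apply (a b : Fin 3) (q : Quat) (x : R3) :
    planeCLM a b q x = x b • 1 - x a • q := by
  simp [planeCLM]

lemma inPlane_planeCLM (a b : Fin 3) (q : Quat) (x : R3) : InPlane q (planeCLM a b q x) :=
  ⟨x b, -x a, by rw [planeCLM_apply]; module⟩

lemma isMonogenicCLM_planeCLM_01 : IsMonogenicCLM (planeCLM 0 1 qk) := by
  simp [IsMonogenicCLM, planeCLM_apply, e]

lemma isMonogenicCLM_planeCLM_02 : IsMonogenicCLM (planeCLM 0 2 qj) := by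
  simp [IsMonogenicCLM, planeCLM_apply, e]

lemma isMonogenicCLM_planeCLM_12 : IsMonogenicCLM (planeCLM 1 2 qi) := by
  simp [IsMonogenicCLM, planeCLM_apply, e, qk_mul_qi]

lemma z01_eq : z01 = planeCLM 0 1 qk := by ext1 x; simp [z01, planeCLM_apply]

lemma z02_eq : z02 = planeCLM 0 2 qj := by ext1 x; simp [z02, planeCLM_apply]

lemma z12_eq : z12 = planeCLM 1 2 qi := by ext1 x; simp [z12, planeCLM_apply]

lemma z01K_eq (K : Set R3) : z01K K = (planeCLM 0 1 qk : C(R3, Quat)).restrict K := by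
  ext1 x; simp [z01K, z01_eq]

lemma z02K_eq (K : Set R3) : z02K K = (planeCLM 0 2 qj : C(R3, Quat)).restrict K := by
  ext1 x; simp [z02K, z02_eq]

lemma z12K_eq (K : Set R3) : z12K K = (planeCLM 1 2 qi : C(R3, Quat)).restrict K := by
  ext1 x; simp [z12K, z12_eq]

def nullWords (K : Set R3) (δ : C(K, Quat) → Quat) : Subsemigroup C(K, Quat) where
  carrier := {f | ∃ L : List C(K, Quat),
    (∀ g ∈ L, IsPlaneSpinor K g) ∧ (∃ g ∈ L, δ g = 0) ∧ L.prod = f}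
  mul_mem' := by
    rintro _ _ ⟨L₁, hL₁, ⟨g, hg, hδg⟩, rfl⟩ ⟨L₂, hL₂, -, rfl⟩
    refine ⟨L₁ ++ L₂, ?_, ⟨g, List.mem_append_left _ hg, hδg⟩, List.prod_append⟩
    simp only [List.mem_append]
    rintro g (hg | hg)
    exacts [hL₁ g hg, hL₂ g hg]

def normSqWord (K : Set R3) (a b : Fin 3) (q r : Quat) (p : R3) : C(K, Quat) :=
  let Z := (planeCLM a b q : C(R3, Quat)).restrict K - ContinuousMap.const K (planeCLM a b q p)
  Z * ContinuousMap.const K r * Z * ContinuousMap.const K (-r)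

lemma normSqWord_apply {K : Set R3} (a b : Fin 3) {q r : Quat} (hq : q ^ 2 = -1)
    (hr : r ^ 2 = -1) (hqr : q * r = -(r * q)) (p : R3) (x : K) :
    normSqWord K a b q r p x = (((x : R3) b - p b) ^ 2 + ((x : R3) a - p a) ^ 2) • 1 := by
  have hZ : planeCLM a b q x - planeCLM a b q p
      = ((x : R3) b - p b) • 1 + (-((x : R3) a - p a)) • q := by
    simp only [planeCLM_apply]; module
  simp only [normSqWord, ContinuousMap.mul_apply, ContinuousMap.sub_apply,
    ContinuousMap.restrict_apply, ContinuousMap.coe_coe, ContinuousMap.const_apply, hZ]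
  rw [smul_one_add_smul_mul_mul_neg hq hr hqr, neg_sq]

namespace IsSpinCharacter

variable {K : Set R3} {δ : C(K, Quat) → Quat}

lemma map_const (hδ : IsSpinCharacter K δ) (a : Quat) : δ (ContinuousMap.const K a) = a := by
  simpa [hδ.map_one] using hδ.map_smul_right 1 a

def toLinearMap (hδ : IsSpinCharacter K δ) : C(K, Quat) →ₗ[ℝ] Quat where
  toFun := δ
  map_add' := hδ.map_add
  map_smul' r f := by
    have hf : r • f = f * ContinuousMap.const K (r • 1) := by ext1 x; simp
    simp [hf, hδ.map_smul_right]

lemma map_sub (hδ : IsSpinCharacter K δ) (f g : C(K, Quat)) : δ (f - g) = δ f - δ g :=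
  hδ.toLinearMap.map_sub f g

lemma map_eq_zero_of_mem_nullWords (hδ : IsSpinCharacter K δ) {f : C(K, Quat)}
    (hf : f ∈ nullWords K δ) : δ f = 0 := by
  obtain ⟨L, hL, ⟨g, hg, hδg⟩, rfl⟩ := hf
  rw [hδ.map_list_prod L hL]
  exact List.prod_eq_zero (List.mem_map.mpr ⟨g, hg, hδg⟩)

lemma map_eq_zero_of_mem_adjoin_nullWords (hδ : IsSpinCharacter K δ) {f : C(K, Quat)}
    (hf : f ∈ NonUnitalAlgebra.adjoin ℝ (nullWords K δ : Set C(K, Quat))) : δ f = 0 := by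
  rw [← NonUnitalSubalgebra.mem_toSubmodule, NonUnitalAlgebra.adjoin_eq_span,
    Subsemigroup.closure_eq] at hf
  have hker :
      Submodule.span ℝ (nullWords K δ : Set C(K, Quat)) ≤ LinearMap.ker hδ.toLinearMap :=
    Submodule.span_le.mpr fun g hg => hδ.map_eq_zero_of_mem_nullWords hg
  exact hker hf

lemma normSqWord_mem_nullWords (hδ : IsSpinCharacter K δ) {a b : Fin 3} {q r : Quat}
    (hq : q ^ 2 = -1) (hr : r ^ 2 = -1) (hmon : IsMonogenicCLM (planeCLM a b q)) {p : R3}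
    (hp : δ ((planeCLM a b q : C(R3, Quat)).restrict K) = planeCLM a b q p) :
    normSqWord K a b q r p ∈ nullWords K δ := by
  set Z := (planeCLM a b q : C(R3, Quat)).restrict K - ContinuousMap.const K (planeCLM a b q p)
  have hZ : IsPlaneSpinor K Z :=
    isPlaneSpinor_of_affine hq (inPlane_planeCLM a b q) hmon (inPlane_planeCLM a b q (-p))
      fun x => by simp [Z, sub_eq_add_neg]
  have hδZ : δ Z = 0 := by rw [hδ.map_sub, hp, hδ.map_const, sub_self]
  refine ⟨[Z, ContinuousMap.const K r, Z, ContinuousMap.const K (-r)], ?_,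
    ⟨Z, by simp, hδZ⟩, ?_⟩
  · simp only [List.mem_cons, List.not_mem_nil, or_false]
    rintro g (rfl | rfl | rfl | rfl)
    exacts [hZ, isPlaneSpinor_const K hr ⟨0, 1, by simp⟩, hZ,
      isPlaneSpinor_const K hr ⟨0, -1, by simp⟩]
  · simp [normSqWord, Z, mul_assoc]

end IsSpinCharacter

/-- Identification lemma: the point produced by the correspondence lemma lies in `K`. -/
theorem character_point_mem (K : Set R3) (hK : IsCompactRegion K)
    (δ : C(K, Quat) → Quat) (hδ : IsSpinCharacter K δ) (p : R3)
    (h01 : δ (z01K K) = z01 p) (h02 : δ (z02K K) = z02 p)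
    (h12 : δ (z12K K) = z12 p) :
    p ∈ K := by
  by_contra hp
  have : CompactSpace K := isCompact_iff_compactSpace.mp hK.2.1
  rw [z01K_eq, z01_eq] at h01
  rw [z02K_eq, z02_eq] at h02
  rw [z12K_eq, z12_eq] at h12
  set W := normSqWord K 0 1 qk qi p + normSqWord K 0 2 qj qi p + normSqWord K 1 2 qi qj p
  have hW : ∀ x : K, W x = (2 * dist (x : R3) p ^ 2) • 1 := fun x => by
    simp only [W, ContinuousMap.add_apply, normSqWord_apply _ _ qk_sq qi_sq qk_mul_qi_eq_neg,
      normSqWord_apply _ _ qj_sq qi_sq qj_mul_qi_eq_neg,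
      normSqWord_apply _ _ qi_sq qj_sq qi_mul_qj_eq_neg, EuclideanSpace.dist_eq]
    rw [Real.sq_sqrt (by positivity), Fin.sum_univ_three]
    simp only [Real.dist_eq, sq_abs]
    module
  have hWmem : W ∈ NonUnitalAlgebra.adjoin ℝ (nullWords K δ : Set C(K, Quat)) := by
    refine add_mem (add_mem ?_ ?_) ?_ <;> refine NonUnitalAlgebra.subset_adjoin ℝ ?_
    exacts [hδ.normSqWord_mem_nullWords qk_sq qi_sq isMonogenicCLM_planeCLM_01 h01,
      hδ.normSqWord_mem_nullWords qj_sq qi_sq isMonogenicCLM_planeCLM_02 h02,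
      hδ.normSqWord_mem_nullWords qi_sq qj_sq isMonogenicCLM_planeCLM_12 h12]
  obtain ⟨c, hc⟩ := ContinuousMap.exists_norm_one_add_smul_lt_one
    ⟨fun x : K => 2 * dist (x : R3) p ^ 2, by fun_prop⟩
    (fun x => mul_pos two_pos (pow_pos (dist_pos.2 fun h : (x : R3) = p => hp (h ▸ x.2)) 2)) hW
  refine one_ne_zero (hδ.map_one.symm.trans ?_)
  exact AddMonoidHom.map_one_eq_zero_of_norm_one_add_lt_one hδ.toLinearMap.toAddMonoidHom
    hδ.continuous (M := (NonUnitalAlgebra.adjoin ℝ _).toNonUnitalSubring)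
    (fun f hf => hδ.map_eq_zero_of_mem_adjoin_nullWords hf)
    (SMulMemClass.smul_mem (s := NonUnitalAlgebra.adjoin ℝ _) c hWmem) hc

end
end

section
/- Let K ⊆ ℝ³ be a nonempty compact set. Then the smallest ℝ-subalgebra of C(K, ℍ) containing 𝓜⁺(K) is dense in C(K, ℍ) for the supremum norm. (Stone–Weierstrass theorem for monogenic spinor fields, three-dimensional quaternionic case: the algebra generated by the closure of the monogenic spinor fields is dense in the continuous spinor fields.) -/
noncomputable section

/-!
Constants and the injective linear monogenic field `x ↦ x₀ (1 - k) + x₁ + x₂ j` lie in 𝓜⁺(K),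
so the algebra they generate contains the constants and separates the points of `K`.
Such a subalgebra `A` of `C(X, ℍ)`, `X` compact, is dense: by `4 Re q = q - iqi - jqj - kqk` the
real parts of elements of `A` lie in `A`, and the real parts of `star (f x - f y) * f` separate
`x` and `y`; the real Stone–Weierstrass theorem then puts every real function in the closure of
`A`, and `f = Re f + Re (-i f) i + Re (-j f) j + Re (-k f) k` finishes.
-/

open ContinuousMap
open scoped Quaternion

section QuaternionStoneWeierstrass

variable {X : Type*} [TopologicalSpace X]

def ofRealCM : C(X, ℝ) →ₐ[ℝ] C(X, Quat) :=
  (Algebra.ofId ℝ Quat).compLeftContinuous ℝ (continuous_algebraMap ℝ Quat)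

@[simp]
lemma ofRealCM_apply (g : C(X, ℝ)) (x : X) : ofRealCM g x = (g x : Quat) := rfl

lemma continuous_ofRealCM : Continuous (ofRealCM : C(X, ℝ) → C(X, Quat)) :=
  ContinuousMap.continuous_postcomp _

def reCM (f : C(X, Quat)) : C(X, ℝ) :=
  (⟨QuaternionAlgebra.re, Quaternion.continuous_re⟩ : C(Quat, ℝ)).comp f

@[simp]
lemma reCM_apply (f : C(X, Quat)) (x : X) : reCM f x = (f x).re := rfl

lemma qi_components : qi.re = 0 ∧ qi.imI = 1 ∧ qi.imJ = 0 ∧ qi.imK = 0 := ⟨rfl, rfl, rfl, rfl⟩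
lemma qj_components : qj.re = 0 ∧ qj.imI = 0 ∧ qj.imJ = 1 ∧ qj.imK = 0 := ⟨rfl, rfl, rfl, rfl⟩
lemma qk_components : qk.re = 0 ∧ qk.imI = 0 ∧ qk.imJ = 0 ∧ qk.imK = 1 := ⟨rfl, rfl, rfl, rfl⟩

lemma coe_re_eq_smul (q : Quat) :
    (q.re : Quat) = (4⁻¹ : ℝ) • (q - qi * q * qi - qj * q * qj - qk * q * qk) := by
  ext <;> simp [qi_components, qj_components, qk_components]
  ring

lemma eq_sum_coe_re_mul (q : Quat) :
    q = q.re + ((-qi) * q).re * qi + ((-qj) * q).re * qj + ((-qk) * q).re * qk := by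
  ext <;> simp [qi_components, qj_components, qk_components]

lemma ofRealCM_reCM_mem {A : Subalgebra ℝ C(X, Quat)} (hconst : ∀ c, const X c ∈ A)
    {f : C(X, Quat)} (hf : f ∈ A) : ofRealCM (reCM f) ∈ A := by
  have h : ofRealCM (reCM f) = (4⁻¹ : ℝ) • (f - const X qi * f * const X qi
      - const X qj * f * const X qj - const X qk * f * const X qk) := by
    ext1 x
    simpa using coe_re_eq_smul (f x)
  rw [h]
  exact Subalgebra.smul_mem _ (by apply_rules [sub_mem, mul_mem]) _

lemma Subalgebra.SeparatesPoints.comap_ofRealCM {A : Subalgebra ℝ C(X, Quat)}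
    (hconst : ∀ c, const X c ∈ A) (hA : A.SeparatesPoints) :
    (A.comap ofRealCM).SeparatesPoints := by
  intro x y hxy
  obtain ⟨_, ⟨f, hf, rfl⟩, hfxy⟩ := hA hxy
  -- `star d * d` has real part `normSq d`, which vanishes only at `d = 0`
  set d := f x - f y
  refine ⟨_, ⟨reCM (const X (star d) * f), ofRealCM_reCM_mem hconst (mul_mem (hconst _) hf), rfl⟩,
    fun h => hfxy ?_⟩
  have hre : (star d * d).re = 0 := by
    simp only [reCM_apply, ContinuousMap.mul_apply, const_apply] at h
    rw [mul_sub, Quaternion.re_sub, h, sub_self]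
  rwa [Quaternion.star_mul_self, Quaternion.re_coe, Quaternion.normSq_eq_zero, sub_eq_zero] at hre

theorem ContinuousMap.quaternionSubalgebra_topologicalClosure_eq_top_of_separatesPoints
    [CompactSpace X] (A : Subalgebra ℝ C(X, Quat)) (hconst : ∀ c, const X c ∈ A)
    (hA : A.SeparatesPoints) : A.topologicalClosure = ⊤ := by
  have hreal (g : C(X, ℝ)) : ofRealCM g ∈ A.topologicalClosure := by
    have hg : g ∈ (A.comap ofRealCM).topologicalClosure := by
      rw [subalgebra_topologicalClosure_eq_top_of_separatesPoints _ (hA.comap_ofRealCM hconst)]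
      trivial
    exact map_mem_closure continuous_ofRealCM hg fun _ h => h
  have hconst' (c : Quat) : const X c ∈ A.topologicalClosure := A.le_topologicalClosure (hconst c)
  rw [eq_top_iff]
  intro f _
  have hf : f = ofRealCM (reCM f) + ofRealCM (reCM (const X (-qi) * f)) * const X qi
      + ofRealCM (reCM (const X (-qj) * f)) * const X qj
      + ofRealCM (reCM (const X (-qk) * f)) * const X qk := by
    ext1 x
    simpa using eq_sum_coe_re_mul (f x)
  rw [hf]
  apply_rules [add_mem, mul_mem]

end QuaternionStoneWeierstrass

lemma monogenicOn_const (c : Quat) (U : Set R3) : MonogenicOn (fun _ => c) U :=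
  fun _ _ => ⟨differentiableAt_const c, by simp⟩

lemma ContinuousLinearMap.monogenicOn (L : R3 →L[ℝ] Quat)
    (hL : L (e 0) + qk * L (e 1) + qj * L (e 2) = 0) (U : Set R3) : MonogenicOn L U :=
  fun _ _ => ⟨L.differentiableAt, by rwa [L.fderiv]⟩

lemma restrict_mem_monSpinorFields (K : Set R3) (F : C(R3, Quat)) (hF : MonogenicOn F Set.univ) :
    F.restrict K ∈ MonSpinorFields K :=
  subset_closure ⟨Set.univ, F, isOpen_univ, Set.subset_univ K, hF, fun _ => rfl⟩

-- monogenic iff `L e₀ = -(qk * L e₁ + qj * L e₂)`; the choice `L e₁ = 1`, `L e₂ = qj` makes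
-- `L e₀ = 1 - qk`, and these three values are `ℝ`-linearly independent
def monogenicEmbedding : R3 →L[ℝ] Quat :=
  (EuclideanSpace.proj (0 : Fin 3)).smulRight (1 - qk) +
    (EuclideanSpace.proj (1 : Fin 3)).smulRight 1 + (EuclideanSpace.proj (2 : Fin 3)).smulRight qj

lemma monogenicEmbedding_apply (x : R3) :
    monogenicEmbedding x = x 0 • (1 - qk) + x 1 • (1 : Quat) + x 2 • qj := by
  simp [monogenicEmbedding]

lemma monogenicOn_monogenicEmbedding (U : Set R3) : MonogenicOn monogenicEmbedding U := by
  refine monogenicEmbedding.monogenicOn ?_ U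
  simp only [monogenicEmbedding_apply, e, PiLp.single_apply]
  ext <;> simp [qj_components]

lemma monogenicEmbedding_injective : Function.Injective monogenicEmbedding := by
  intro x y h
  have hcomp := congrArg (fun q : Quat => (q.re, q.imJ, q.imK)) h
  simp [monogenicEmbedding_apply, qj_components, qk_components] at hcomp
  ext m
  fin_cases m <;> simp <;> linarith

theorem stone_weierstrass_monogenic_general (K : Set R3) (hc : IsCompact K) :
    Dense ((Algebra.adjoin ℝ (MonSpinorFields K) : Subalgebra ℝ C(K, Quat)) :
      Set C(K, Quat)) := by
  have : CompactSpace K := isCompact_iff_compactSpace.mp hc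
  have hconst (c : Quat) : const K c ∈ Algebra.adjoin ℝ (MonSpinorFields K) :=
    Algebra.subset_adjoin <| restrict_mem_monSpinorFields K (const R3 c) (monogenicOn_const c _)
  let F : C(R3, Quat) := ⟨monogenicEmbedding, monogenicEmbedding.continuous⟩
  have hsep : (Algebra.adjoin ℝ (MonSpinorFields K)).SeparatesPoints := fun x y hxy =>
    ⟨_, ⟨F.restrict K, Algebra.subset_adjoin <|
      restrict_mem_monSpinorFields K F (monogenicOn_monogenicEmbedding _), rfl⟩,
      fun h => hxy (Subtype.ext (monogenicEmbedding_injective h))⟩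
  rw [dense_iff_closure_eq, ← Subalgebra.topologicalClosure_coe,
    quaternionSubalgebra_topologicalClosure_eq_top_of_separatesPoints _ hconst hsep,
    Algebra.coe_top]

/-- Stone–Weierstrass theorem for monogenic spinor fields: the smallest ℝ-subalgebra of
`C(K, Quat)` containing 𝓜⁺(K) is dense in `C(K, Quat)`. -/
theorem stone_weierstrass_monogenic (K : Set R3) (hne : K.Nonempty) (hc : IsCompact K) :
    Dense ((Algebra.adjoin ℝ (MonSpinorFields K) : Subalgebra ℝ C(K, Quat)) :
      Set C(K, Quat)) :=
  stone_weierstrass_monogenic_general K hc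

end
end
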